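/- For each fixed β < 0 and y ≥ 0, the function t ↦ Φ((y - βt)/(σ√t)) - e^{2βy/σ²} Φ((-y - βt)/(σ√t)) is monotone decreasing in t on (0,∞), and converges as t → ∞ to 1 - e^{2βy/σ²}. -/

import Mathlib

/-!
The derivative in `t` of `Φ(a(t)) - e^{2βy/σ²} Φ(b(t))`, with `a(t) = (y - βt)/(σ√t)` and
`b(t) = (-y - βt)/(σ√t)`, collapses to `φ(a(t)) (a'(t) - b'(t))`, because the exponential factor
is exactly the ratio of Gaussian densities `φ(a(t)) / φ(b(t))` (as `b² - a² = 4βy/σ²`). Since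
`a - b = 2y/(σ√t)` is decreasing, the function is decreasing. For `β < 0` both arguments tend to
`+∞`, so both `Φ` terms tend to `1`.
-/

noncomputable def stdNormalCDF (x : ℝ) : ℝ :=
  (Real.sqrt (2 * Real.pi))⁻¹ * ∫ u in Set.Iic x, Real.exp (-(u ^ 2) / 2)

open Real MeasureTheory Filter Set Topology

noncomputable def stdNormalPDF (x : ℝ) : ℝ :=
  (√(2 * π))⁻¹ * exp (-(x ^ 2) / 2)

lemma stdNormalPDF_nonneg (x : ℝ) : 0 ≤ stdNormalPDF x := by
  unfold stdNormalPDF; positivity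

lemma integrable_exp_neg_sq_div_two : Integrable fun u : ℝ => exp (-(u ^ 2) / 2) := by
  convert integrable_exp_neg_mul_sq (b := (2⁻¹ : ℝ)) (by norm_num) using 2 with u
  ring_nf

lemma integral_exp_neg_sq_div_two : ∫ u : ℝ, exp (-(u ^ 2) / 2) = √(2 * π) := by
  convert integral_gaussian (2⁻¹ : ℝ) using 3 with u
  · ring_nf
  · field_simp

lemma hasDerivAt_integral_Iic {E : Type*} [NormedAddCommGroup E] [NormedSpace ℝ E]
    [CompleteSpace E] {f : ℝ → E} (hf : Integrable f) (hfc : Continuous f) (x : ℝ) :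
    HasDerivAt (fun z => ∫ u in Iic z, f u) (f x) x := by
  have hsplit : ∀ z, ∫ u in Iic z, f u = (∫ u in Iic 0, f u) + ∫ u in (0 : ℝ)..z, f u := fun z =>
    (add_sub_cancel _ _).symm.trans
      (congrArg _ (intervalIntegral.integral_Iic_sub_Iic hf.integrableOn hf.integrableOn))
  rw [funext hsplit]
  exact (intervalIntegral.integral_hasDerivAt_right hf.intervalIntegrable
    hfc.aestronglyMeasurable.stronglyMeasurableAtFilter hfc.continuousAt).const_add _

lemma hasDerivAt_stdNormalCDF (x : ℝ) : HasDerivAt stdNormalCDF (stdNormalPDF x) x := by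
  unfold stdNormalCDF stdNormalPDF
  exact (hasDerivAt_integral_Iic integrable_exp_neg_sq_div_two (by fun_prop) x).const_mul
    (√(2 * π))⁻¹

lemma tendsto_stdNormalCDF_atTop : Tendsto stdNormalCDF atTop (𝓝 1) := by
  have h := ((aecover_Iic (μ := volume) tendsto_id).integral_tendsto_of_countably_generated
    integrable_exp_neg_sq_div_two).const_mul (√(2 * π))⁻¹
  rwa [integral_exp_neg_sq_div_two, inv_mul_cancel₀ (by positivity)] at h

section ReflectedBrownianMotion

variable {σ β : ℝ}

noncomputable def driftArg (σ β z t : ℝ) : ℝ :=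
  (z - β * t) / (σ * √t)

noncomputable def rbmCDF (σ β y t : ℝ) : ℝ :=
  stdNormalCDF (driftArg σ β y t) - exp (2 * β * y / σ ^ 2) * stdNormalCDF (driftArg σ β (-y) t)

lemma hasDerivAt_driftArg (hσ : σ ≠ 0) (z : ℝ) {t : ℝ} (ht : 0 < t) :
    HasDerivAt (driftArg σ β z) (-(z + β * t) / (2 * σ * t * √t)) t := by
  have hsqrt : 0 < √t := sqrt_pos.2 ht
  have h := (((hasDerivAt_id' t).const_mul β).const_sub z).div
    ((hasDerivAt_sqrt ht.ne').const_mul σ) (by positivity)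
  refine h.congr_deriv ?_
  field_simp
  rw [sq_sqrt ht.le]
  ring

lemma exp_mul_stdNormalPDF_driftArg_neg (hσ : σ ≠ 0) (y : ℝ) {t : ℝ} (ht : 0 < t) :
    exp (2 * β * y / σ ^ 2) * stdNormalPDF (driftArg σ β (-y) t)
      = stdNormalPDF (driftArg σ β y t) := by
  have hexponent : 2 * β * y / σ ^ 2 + -((-y - β * t) / (σ * √t)) ^ 2 / 2
      = -((y - β * t) / (σ * √t)) ^ 2 / 2 := by
    rw [div_pow, div_pow, mul_pow, sq_sqrt ht.le]
    field_simp
    ring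
  unfold stdNormalPDF driftArg
  rw [mul_left_comm, ← exp_add, hexponent]

lemma hasDerivAt_rbmCDF (hσ : σ ≠ 0) (y : ℝ) {t : ℝ} (ht : 0 < t) :
    HasDerivAt (rbmCDF σ β y) (-(y / (σ * t * √t)) * stdNormalPDF (driftArg σ β y t)) t := by
  have hpos := (hasDerivAt_stdNormalCDF _).comp t (hasDerivAt_driftArg (β := β) hσ y ht)
  have hneg := (hasDerivAt_stdNormalCDF _).comp t (hasDerivAt_driftArg (β := β) hσ (-y) ht)
  refine (hpos.sub (hneg.const_mul (exp (2 * β * y / σ ^ 2)))).congr_deriv ?_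
  rw [← mul_assoc, exp_mul_stdNormalPDF_driftArg_neg hσ y ht]
  field_simp
  ring

lemma antitoneOn_rbmCDF (hσ : 0 < σ) {y : ℝ} (hy : 0 ≤ y) :
    AntitoneOn (rbmCDF σ β y) (Ioi 0) := by
  have hderiv (t : ℝ) (ht : t ∈ Ioi 0) := hasDerivAt_rbmCDF (β := β) hσ.ne' y ht
  refine antitoneOn_of_deriv_nonpos (convex_Ioi 0)
    (fun t ht => (hderiv t ht).continuousAt.continuousWithinAt) ?_ ?_ <;> rw [interior_Ioi]
  · exact fun t ht => (hderiv t ht).differentiableAt.differentiableWithinAt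
  · intro t ht
    have : 0 < t := ht
    rw [(hderiv t ht).deriv, neg_mul, neg_nonpos]
    exact mul_nonneg (by positivity) (stdNormalPDF_nonneg _)

lemma tendsto_driftArg_atTop (hσ : 0 < σ) (hβ : β < 0) (z : ℝ) :
    Tendsto (driftArg σ β z) atTop atTop := by
  have hsqrt : Tendsto (fun t => σ * √t) atTop atTop := tendsto_sqrt_atTop.const_mul_atTop hσ
  have h : Tendsto (fun t => z * (σ * √t)⁻¹ + (-β / σ) * √t) atTop atTop := by
    simpa using (hsqrt.inv_tendsto_atTop.const_mul z).add_atTop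
      (tendsto_sqrt_atTop.const_mul_atTop (div_pos (neg_pos.2 hβ) hσ))
  refine h.congr' ?_
  filter_upwards [eventually_gt_atTop 0] with t ht
  have : 0 < √t := sqrt_pos.2 ht
  unfold driftArg
  field_simp
  rw [sq_sqrt ht.le]
  ring

lemma tendsto_rbmCDF_atTop (hσ : 0 < σ) (hβ : β < 0) (y : ℝ) :
    Tendsto (rbmCDF σ β y) atTop (𝓝 (1 - exp (2 * β * y / σ ^ 2))) := by
  have h := (tendsto_stdNormalCDF_atTop.comp (tendsto_driftArg_atTop hσ hβ y)).sub
    ((tendsto_stdNormalCDF_atTop.comp (tendsto_driftArg_atTop hσ hβ (-y))).const_mul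
      (exp (2 * β * y / σ ^ 2)))
  rwa [mul_one] at h

end ReflectedBrownianMotion

/-- For fixed `β < 0` and `y ≥ 0`, the RBM cdf
`t ↦ Φ((y - βt)/(σ√t)) - e^{2βy/σ²} Φ((-y - βt)/(σ√t))` is monotone decreasing in `t` on
`(0,∞)` and converges, as `t → ∞`, to the exponential stationary cdf `1 - e^{2βy/σ²}`. -/
theorem stmt3 (σ β y : ℝ) (hσ : 0 < σ) (hβ : β < 0) (hy : 0 ≤ y) :
    AntitoneOn (fun t : ℝ =>
      stdNormalCDF ((y - β * t) / (σ * Real.sqrt t))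
        - Real.exp (2 * β * y / σ ^ 2) * stdNormalCDF ((-y - β * t) / (σ * Real.sqrt t)))
      (Set.Ioi 0) ∧
    Filter.Tendsto (fun t : ℝ =>
      stdNormalCDF ((y - β * t) / (σ * Real.sqrt t))
        - Real.exp (2 * β * y / σ ^ 2) * stdNormalCDF ((-y - β * t) / (σ * Real.sqrt t)))
      Filter.atTop (nhds (1 - Real.exp (2 * β * y / σ ^ 2))) :=
  ⟨antitoneOn_rbmCDF hσ hy, tendsto_rbmCDF_atTop hσ hβ y⟩
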